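/- Relative distance bound for primary affine variety codes: with Δ_≺(I_q) = {M_1,...,M_n} enumerated increasingly by ≺, suppose for each i a number σ(M_i) is given such that every codeword ev(F) with lm(F) = M_i and Supp(F) ⊆ Δ_≺(I_q) has Hamming weight at least σ(M_i). Then for L_2 ⊊ L_1 ⊆ Δ_≺(I_q), setting n(L_1,L_2) = min{i : M_i ∈ L_1 \ L_2}, the relative distance d(C(I,L_1), C(I,L_2)) is at least min{σ(M_i) : M_i ∈ L_1, i ≥ n(L_1,L_2)}. -/
import Mathlib

/-- In a finite nonempty set, a transitive "trichotomous" irreflexive relation has a maximum. -/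
lemma exists_rmax {α : Type*} (r : α → α → Prop)
    (htri : ∀ d e, d ≠ e → r d e ∨ r e d)
    (htrans : ∀ d e g, r d e → r e g → r d g)
    (s : Finset α) (hs : s.Nonempty) : ∃ a ∈ s, ∀ b ∈ s, b ≠ a → r b a := by
  classical
  revert hs
  induction s using Finset.induction_on with
  | empty => intro h; exact absurd h (by simp)
  | @insert a s ha ih =>
    intro _
    rcases s.eq_empty_or_nonempty with rfl | hne
    · exact ⟨a, by simp, by simp⟩
    · obtain ⟨mx, hmx, hmax⟩ := ih hne
      by_cases hamx : a = mx
      · subst hamx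
        exact ⟨a, Finset.mem_insert_self _ _, fun b hb hba => by
          rcases Finset.mem_insert.1 hb with rfl | hb
          · exact absurd rfl hba
          · exact hmax b hb hba⟩
      rcases htri a mx hamx with h | h
      · refine ⟨mx, Finset.mem_insert_of_mem hmx, fun b hb hbm => ?_⟩
        rcases Finset.mem_insert.1 hb with rfl | hb
        · exact h
        · exact hmax b hb hbm
      · refine ⟨a, Finset.mem_insert_self _ _, fun b hb hba => ?_⟩
        rcases Finset.mem_insert.1 hb with rfl | hb
        · exact absurd rfl hba
        · by_cases hbm : b = mx
          · exact hbm ▸ h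
          · exact htrans b mx a (hmax b hb hbm) h

open MvPolynomial in
/-- Relative distance bound for primary affine variety codes:
with the footprint `Δ_≺(I_q) = {M_1,...,M_n}` enumerated increasingly by the monomial
ordering, suppose each `σ(M_i)` lower bounds the Hamming weight of every codeword `ev(F)`
with `lm(F) = M_i` and `Supp(F) ⊆ Δ_≺(I_q)`.  Then for `L_2 ⊊ L_1 ⊆ Δ_≺(I_q)` and
`n(L_1,L_2) = min{i : M_i ∈ L_1 \ L_2}`, every codeword of `C(I,L_1) \ C(I,L_2)` has
Hamming weight at least `min{σ(M_i) : M_i ∈ L_1, i ≥ n(L_1,L_2)}`. -/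
theorem stmt11 (q m n : ℕ) (hq : IsPrimePow q)
    (K : Type) [Field K] [Fintype K] [DecidableEq K] (hcard : Fintype.card K = q)
    (I : Ideal (MvPolynomial (Fin m) K))
    (r : (Fin m →₀ ℕ) → (Fin m →₀ ℕ) → Prop)
    (htri : ∀ d e, d ≠ e → r d e ∨ r e d) (hirr : ∀ d, ¬ r d d)
    (htrans : ∀ d e g, r d e → r e g → r d g)
    (hadd : ∀ d e g, r d e → r (d + g) (e + g))
    (hzero : ∀ d, d ≠ 0 → r 0 d)
    -- the points P_1, ..., P_n enumerate the variety of I_q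
    (P : Fin n → (Fin m → K)) (hPinj : Function.Injective P)
    (hPrange : ∀ p : Fin m → K, (∃ i, P i = p) ↔
      ∀ g ∈ I ⊔ Ideal.span {g | ∃ j : Fin m, g = X j ^ q - X j}, eval p g = 0)
    -- the monomials M_1, ..., M_n enumerate the footprint, increasingly w.r.t. r
    (M : Fin n → (Fin m →₀ ℕ))
    (hMrange : ∀ d : Fin m →₀ ℕ, (∃ i, M i = d) ↔
      ¬ ∃ f ∈ I ⊔ Ideal.span {g | ∃ j : Fin m, g = X j ^ q - X j}, f ≠ 0 ∧
        (d ∈ f.support ∧ ∀ e ∈ f.support, e ≠ d → r e d))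
    (hMmono : ∀ i j : Fin n, i < j → r (M i) (M j))
    -- the evaluation map
    (ev : MvPolynomial (Fin m) K → (Fin n → K))
    (hev : ∀ f i, ev f i = eval (P i) f)
    -- σ(M_i) lower bounds the weight of codewords whose defining polynomial has support
    -- inside the footprint and leading monomial M_i
    (σ : (Fin m →₀ ℕ) → ℕ)
    (hσ : ∀ (i : Fin n) (f : MvPolynomial (Fin m) K), f ≠ 0 →
      (∀ d ∈ f.support, ∃ j, M j = d) →
      (M i ∈ f.support ∧ ∀ e ∈ f.support, e ≠ M i → r e (M i)) →
      σ (M i) ≤ hammingNorm (ev f))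
    (L1 L2 : Set (Fin m →₀ ℕ)) (hL21 : L2 ⊂ L1) (hL1 : ∀ d ∈ L1, ∃ i, M i = d)
    (i0 : Fin n) (hi0 : IsLeast {i : Fin n | M i ∈ L1 ∧ M i ∉ L2} i0)
    (c : Fin n → K)
    (hc1 : c ∈ Submodule.span K {v | ∃ d ∈ L1, v = ev (monomial d (1 : K))})
    (hc2 : c ∉ Submodule.span K {v | ∃ d ∈ L2, v = ev (monomial d (1 : K))})
    (B : ℕ) (hB : ∀ i : Fin n, M i ∈ L1 → i0 ≤ i → B ≤ σ (M i)) :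
    B ≤ hammingNorm c := by
  classical
  -- rewrite the span set as an image
  have hset1 : {v | ∃ d ∈ L1, v = ev (monomial d (1 : K))}
      = (fun d => ev (monomial d (1 : K))) '' L1 := by
    ext v; constructor
    · rintro ⟨d, hd, rfl⟩; exact ⟨d, hd, rfl⟩
    · rintro ⟨d, hd, rfl⟩; exact ⟨d, hd, rfl⟩
  rw [hset1] at hc1
  obtain ⟨l, hlsupp, hlc⟩ := (Finsupp.mem_span_image_iff_linearCombination K).1 hc1
  have hlsupp' : (l.support : Set (Fin m →₀ ℕ)) ⊆ L1 := hlsupp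
  -- the polynomial F
  set F : MvPolynomial (Fin m) K := ∑ d ∈ l.support, monomial d (l d) with hF
  have hcoeff : ∀ e, F.coeff e = l e := by
    intro e
    rw [hF, MvPolynomial.coeff_sum]
    simp only [MvPolynomial.coeff_monomial]
    rw [Finset.sum_ite_eq' l.support e l]
    split
    · rfl
    · next h => exact (Finsupp.notMem_support_iff.1 h).symm
  have hsupp : F.support = l.support := by
    ext e
    simp [MvPolynomial.mem_support_iff, hcoeff, Finsupp.mem_support_iff]
  have hsuppL1 : ∀ d ∈ F.support, d ∈ L1 := by
    intro d hd; exact hlsupp' (by rwa [hsupp] at hd)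
  -- ev F = c
  have hevF : ev F = c := by
    funext i
    rw [hev, ← hlc]
    rw [Finsupp.linearCombination_apply, Finsupp.sum]
    rw [hF, map_sum]
    rw [Finset.sum_apply]
    refine Finset.sum_congr rfl fun d hd => ?_
    rw [Pi.smul_apply, smul_eq_mul, hev]
    simp [MvPolynomial.eval_monomial]
  -- F ≠ 0
  have hF0 : F ≠ 0 := by
    intro h
    apply hc2
    rw [← hevF, h]
    have : ev 0 = 0 := by funext i; rw [hev]; simp
    rw [this]
    exact Submodule.zero_mem _
  -- supp F has an element outside L2
  have hnotL2 : ∃ d ∈ F.support, d ∉ L2 := by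
    by_contra h
    push_neg at h
    apply hc2
    rw [← hevF]
    have : ev F = ∑ d ∈ F.support, F.coeff d • ev (monomial d (1 : K)) := by
      funext i
      rw [hev]
      conv_lhs => rw [F.as_sum]
      rw [map_sum, Finset.sum_apply]
      refine Finset.sum_congr rfl fun d hd => ?_
      rw [Pi.smul_apply, smul_eq_mul, hev]
      simp [MvPolynomial.eval_monomial]
    rw [this]
    refine Submodule.sum_mem _ fun d hd => Submodule.smul_mem _ _ (Submodule.subset_span ?_)
    exact ⟨d, h d hd, rfl⟩
  obtain ⟨dstar, hdstar, hdstarL2⟩ := hnotL2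
  obtain ⟨k, hk⟩ := hL1 dstar (hsuppL1 dstar hdstar)
  have hkmem : k ∈ {i : Fin n | M i ∈ L1 ∧ M i ∉ L2} :=
    ⟨hk ▸ hsuppL1 dstar hdstar, hk ▸ hdstarL2⟩
  have hi0k : i0 ≤ k := hi0.2 hkmem
  -- the leading monomial of F
  have hFne : F.support.Nonempty := by
    rw [Finset.nonempty_iff_ne_empty]
    intro h
    exact hF0 (MvPolynomial.support_eq_empty.1 h)
  obtain ⟨dmax, hdmax, hmax⟩ := exists_rmax r htri htrans F.support hFne
  obtain ⟨j, hj⟩ := hL1 dmax (hsuppL1 dmax hdmax)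
  -- k ≤ j
  have hkj : k ≤ j := by
    by_contra h
    push_neg at h
    have hrjk : r (M j) (M k) := hMmono j k h
    by_cases hdk : M k = M j
    · rw [hdk] at hrjk; exact hirr _ hrjk
    · have : r (M k) (M j) := hj ▸ hmax (M k) (hk ▸ hdstar) (hj ▸ hdk)
      exact hirr _ (htrans _ _ _ hrjk this)
  have hσj : σ (M j) ≤ hammingNorm (ev F) := by
    refine hσ j F hF0 (fun d hd => hL1 d (hsuppL1 d hd)) ⟨hj ▸ hdmax, ?_⟩
    intro e he hne
    exact hj ▸ hmax e he (fun h => hne (h.trans hj.symm))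
  rw [hevF] at hσj
  exact le_trans (hB j (hj ▸ hsuppL1 dmax hdmax) (le_trans hi0k hkj)) hσj
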